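/- For every n ≥ 1 and all u_1, u_2, …, u_n ∈ ℂ, there exist x_1, x_2, …, x_n ∈ ℂ such that p_k(x_1,…,x_n) = u_k for every k ∈ {1,…,n}. -/

import Mathlib

/-! Newton's identities `k e_k = (-1)^(k+1) ∑ (-1)^i e_i p_(k-i)` can be solved for the `e_k`
(dividing by `k`), so any prescribed power sums `u` come with values `e_1, …, e_n`. Let `x` be the
roots of `X^n - e_1 X^(n-1) + ⋯ + (-1)^n e_n`; by Vieta the elementary symmetric functions of `x`
are the `e_j`, and then the same identities, solved for `p_k` instead, force the power sums of `x`
to be the `u_k` by strong induction on `k`. -/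

open Finset Polynomial

section NewtonRelation

variable {R : Type*} [CommRing R]

/-- The `k`-th Newton identity, in the shape of `MvPolynomial.mul_esymm_eq_sum`. -/
def NewtonRelation (e p : ℕ → R) (k : ℕ) : Prop :=
  (k : R) * e k = (-1) ^ (k + 1) * ∑ a ∈ antidiagonal k with a.1 < k, (-1) ^ a.1 * e a.1 * p a.2

theorem newtonRelation_congr_left {e e' p : ℕ → R} {k : ℕ} (h : ∀ j ≤ k, e j = e' j) :
    NewtonRelation e p k ↔ NewtonRelation e' p k := by
  have hsum : ∑ a ∈ antidiagonal k with a.1 < k, (-1) ^ a.1 * e a.1 * p a.2 =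
      ∑ a ∈ antidiagonal k with a.1 < k, (-1) ^ a.1 * e' a.1 * p a.2 :=
    sum_congr rfl fun a ha => by rw [h a.1 (mem_filter.mp ha).2.le]
  rw [NewtonRelation, NewtonRelation, hsum, h k le_rfl]

theorem NewtonRelation.eq_sub_sum {e p : ℕ → R} {k : ℕ} (h : NewtonRelation e p k)
    (he : e 0 = 1) (hk : 0 < k) :
    p k = (-1) ^ (k + 1) * k * e k -
      ∑ a ∈ antidiagonal k with a.1 ∈ Set.Ioo 0 k, (-1) ^ a.1 * e a.1 * p a.2 := by
  have hsplit : {a ∈ antidiagonal k | a.1 < k} =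
      insert (0, k) {a ∈ antidiagonal k | a.1 ∈ Set.Ioo 0 k} := by
    ext ⟨i, j⟩
    simp only [mem_filter, mem_insert, HasAntidiagonal.mem_antidiagonal, Set.mem_Ioo,
      Prod.mk.injEq]
    omega
  rw [NewtonRelation, hsplit, sum_insert (by simp), pow_zero, one_mul, he, one_mul] at h
  have hsq : ((-1 : R) ^ (k + 1)) ^ 2 = 1 := by rw [← pow_mul, pow_mul', neg_one_sq, one_pow]
  linear_combination -(-1 : R) ^ (k + 1) * h -
    (p k + ∑ a ∈ antidiagonal k with a.1 ∈ Set.Ioo 0 k, (-1) ^ a.1 * e a.1 * p a.2) * hsq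

theorem NewtonRelation.eq_of_le {e p q : ℕ → R} {n : ℕ} (he : e 0 = 1)
    (hp : ∀ k ≤ n, NewtonRelation e p k) (hq : ∀ k ≤ n, NewtonRelation e q k) :
    ∀ k, 0 < k → k ≤ n → p k = q k := by
  intro k
  induction k using Nat.strong_induction_on with
  | _ k ih =>
    intro hk hkn
    rw [(hp k hkn).eq_sub_sum he hk, (hq k hkn).eq_sub_sum he hk]
    refine congrArg _ (sum_congr rfl fun a ha => ?_)
    simp only [mem_filter, HasAntidiagonal.mem_antidiagonal, Set.mem_Ioo] at ha
    rw [ih a.2 (by omega) (by omega) (by omega)]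

theorem newtonRelation_aeval_esymm_psum {σ : Type*} [Fintype σ] (x : σ → R) (k : ℕ) :
    NewtonRelation (fun j => MvPolynomial.aeval x (MvPolynomial.esymm σ R j))
      (fun j => ∑ i, x i ^ j) k := by
  simpa [NewtonRelation, MvPolynomial.psum, map_sum] using
    congrArg (MvPolynomial.aeval x) (MvPolynomial.mul_esymm_eq_sum σ R k)

end NewtonRelation

section

variable {K : Type*} [Field K]

noncomputable def esymmOfPsum (u : ℕ → K) : ℕ → K
  | 0 => 1
  | k + 1 => (-1) ^ (k + 2) / (k + 1) *
      ∑ a ∈ ({a ∈ antidiagonal (k + 1) | a.1 < k + 1}).attach,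
        (-1) ^ a.1.1 * esymmOfPsum u a.1.1 * u a.1.2
  decreasing_by exact (mem_filter.mp a.2).2

theorem newtonRelation_esymmOfPsum [CharZero K] (u : ℕ → K) (k : ℕ) :
    NewtonRelation (esymmOfPsum u) u k := by
  cases k with
  | zero => simp [NewtonRelation]
  | succ k =>
    rw [NewtonRelation, esymmOfPsum,
      sum_attach _ fun a : ℕ × ℕ => (-1) ^ a.1 * esymmOfPsum u a.1 * u a.2]
    have hk : (k : K) + 1 ≠ 0 := Nat.cast_add_one_ne_zero k
    push_cast
    field_simp

end

theorem Multiset.exists_fin_map_eq {α : Type*} {n : ℕ} (s : Multiset α) (hs : s.card = n) :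
    ∃ x : Fin n → α, univ.val.map x = s := by
  obtain ⟨l, rfl⟩ : ∃ l : List α, (l : Multiset α) = s := Quot.exists_rep s
  rw [Multiset.coe_card] at hs
  subst hs
  exact ⟨l.get, by rw [Fin.univ_val_map, List.ofFn_get]⟩

theorem natDegree_X_pow_add_sum_fin {R : Type*} [Semiring R] [Nontrivial R] {n : ℕ}
    (c : Fin n → R) :
    (X ^ n + ∑ j : Fin n, C (c j) * X ^ (j : ℕ)).natDegree = n := by
  rw [natDegree_add_eq_left_of_degree_lt (by rw [degree_X_pow]; exact degree_sum_fin_lt c),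
    natDegree_X_pow]

theorem coeff_X_pow_add_sum_fin {R : Type*} [Semiring R] {n : ℕ} (c : Fin n → R) (i : Fin n) :
    (X ^ n + ∑ j : Fin n, C (c j) * X ^ (j : ℕ)).coeff i = c i := by
  simp [coeff_X_pow, coeff_C_mul, Fin.val_inj, i.is_lt.ne]

theorem exists_aeval_esymm_eq {K : Type*} [Field K] [IsAlgClosed K] (n : ℕ) (e : ℕ → K)
    (he : e 0 = 1) :
    ∃ x : Fin n → K,
      ∀ j ≤ n, MvPolynomial.aeval x (MvPolynomial.esymm (Fin n) K j) = e j := by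
  set c : Fin n → K := fun i => (-1) ^ (n - i) * e (n - i)
  set P : K[X] := X ^ n + ∑ i : Fin n, C (c i) * X ^ (i : ℕ)
  have hdeg : P.natDegree = n := natDegree_X_pow_add_sum_fin c
  have hlead : P.leadingCoeff = 1 := (monic_X_pow_add (degree_sum_fin_lt c)).leadingCoeff
  have hcard : P.roots.card = P.natDegree := splits_iff_card_roots.1 (IsAlgClosed.splits P)
  obtain ⟨x, hx⟩ := P.roots.exists_fin_map_eq (hcard.trans hdeg)
  refine ⟨x, fun j hj => ?_⟩
  rcases j.eq_zero_or_pos with rfl | hj0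
  · rw [MvPolynomial.esymm_zero, map_one, he]
  rw [MvPolynomial.aeval_esymm_eq_multiset_esymm, hx]
  have hvieta := coeff_eq_esymm_roots_of_card hcard (k := n - j) (by omega)
  rw [hlead, hdeg, Nat.sub_sub_self hj, one_mul,
    coeff_X_pow_add_sum_fin c ⟨n - j, by omega⟩] at hvieta
  simp only [c, Nat.sub_sub_self hj] at hvieta
  exact (mul_left_cancel₀ (pow_ne_zero j (neg_ne_zero.mpr one_ne_zero)) hvieta).symm

theorem stmt18 (n : ℕ) (u : ℕ → ℂ) :
    ∃ x : Fin n → ℂ, ∀ k, 1 ≤ k → k ≤ n → ∑ i, x i ^ k = u k := by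
  have he₀ : esymmOfPsum u 0 = 1 := by rw [esymmOfPsum]
  obtain ⟨x, hx⟩ := exists_aeval_esymm_eq n (esymmOfPsum u) he₀
  refine ⟨x, NewtonRelation.eq_of_le he₀ (fun k hkn => ?_)
    fun k _ => newtonRelation_esymmOfPsum u k⟩
  exact (newtonRelation_congr_left fun j hj => hx j (hj.trans hkn)).1
    (newtonRelation_aeval_esymm_psum x k)
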